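/- arXiv:1412.0447 — 9 statements merged into one kernel-verified Lean document; each statement's English description precedes it below -/
import Mathlib

section
/- The action map G × X → X is continuous when X is equipped with the topology τ generated by the basis {U · x : U ⊆ G open, x ∈ X}. -/
/-!
Under `(g, y) ↦ g • y`, the preimage of a basic open set `U • x` is the image of
the open set `{(g, h) | g * h ∈ U} ⊆ G × G` under `(g, h) ↦ (g, h • x)`: if `g • y = u • x` then
`y = (g⁻¹ * u) • x`. This map is open because `h ↦ h • x` sends open sets to basic open sets.
-/

open TopologicalSpace

namespace MulAction

variable {G X : Type*}

theorem preimage_smul_image_smul_right [Group G] [MulAction G X] (U : Set G) (x : X) :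
    (fun p : G × X => p.1 • p.2) ⁻¹' ((· • x) '' U) =
      Prod.map id (· • x) '' ((fun p : G × G => p.1 * p.2) ⁻¹' U) := by
  ext ⟨g, y⟩
  constructor
  · rintro ⟨u, hu, hux⟩
    refine ⟨(g, g⁻¹ * u), by simpa using hu, ?_⟩
    simp [mul_smul, hux]
  · rintro ⟨⟨g', h⟩, hgh, hgy⟩
    obtain ⟨rfl, rfl⟩ := Prod.ext_iff.mp hgy
    exact ⟨g' * h, hgh, mul_smul g' h x⟩

/-- The topology `τ(X, G)`. -/
abbrev orbitTopology (G X : Type*) [TopologicalSpace G] [SMul G X] : TopologicalSpace X :=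
  generateFrom {s : Set X | ∃ (U : Set G) (x : X), IsOpen U ∧ s = (· • x) '' U}

variable [TopologicalSpace G]

theorem isOpenMap_smul_right_orbitTopology [SMul G X] (x : X) :
    letI := orbitTopology G X
    IsOpenMap (· • x : G → X) :=
  fun U hU => GenerateOpen.basic _ ⟨U, x, hU, rfl⟩

theorem continuous_smul_orbitTopology [Group G] [ContinuousMul G] [MulAction G X] :
    letI := orbitTopology G X
    Continuous (fun p : G × X => p.1 • p.2) := by
  let := orbitTopology G X
  refine continuous_generateFrom_iff.mpr ?_
  rintro _ ⟨U, x, hU, rfl⟩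
  rw [preimage_smul_image_smul_right]
  exact (IsOpenMap.id.prodMap (isOpenMap_smul_right_orbitTopology x)) _
    (hU.preimage continuous_mul)

end MulAction

theorem action_continuous_in_tau {G X : Type*} [Group G] [TopologicalSpace G]
    [IsTopologicalGroup G] [MulAction G X] :
    letI : TopologicalSpace X :=
      generateFrom {s : Set X | ∃ (U : Set G) (x : X), IsOpen U ∧ s = (· • x) '' U}
    Continuous (fun p : G × X => p.1 • p.2) :=
  MulAction.continuous_smul_orbitTopology
end

section
/- Let G be a topological group acting by automorphisms on a group H. Among all group topologies on H for which the action map G × H → H is continuous, there exists a finest one (i.e., a group topology T(H,G) that is finer than every group topology on H making the action continuous, and which itself makes the action continuous). -/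
theorem continuous_prod_sInf_of_forall {X Y : Type*} [TopologicalSpace X] {f : X × Y → Y}
    {T : Set (TopologicalSpace Y)}
    (hf : ∀ t ∈ T, @Continuous (X × Y) Y (@instTopologicalSpaceProd X Y _ t) t f) :
    @Continuous (X × Y) Y (@instTopologicalSpaceProd X Y _ (sInf T)) (sInf T) f := by
  refine continuous_sInf_rng.2 fun t ht => ?_
  have hid : @Continuous Y Y (sInf T) t id := continuous_id_of_le (sInf_le ht)
  exact @Continuous.comp _ _ _ (@instTopologicalSpaceProd X Y _ (sInf T))
    (@instTopologicalSpaceProd X Y _ t) t _ _ (hf t ht)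
    (@Continuous.prodMap X Y Y X _ t _ (sInf T) id id continuous_id hid)

theorem exists_finest_group_topology_continuous_action_general {G H : Type*} [Group G]
    [TopologicalSpace G] [Group H] [MulDistribMulAction G H] :
    ∃ t : TopologicalSpace H, @IsTopologicalGroup H t _ ∧
      (@Continuous (G × H) H (@instTopologicalSpaceProd G H _ t) t fun p => p.1 • p.2) ∧
      ∀ t' : TopologicalSpace H, @IsTopologicalGroup H t' _ →
        (@Continuous (G × H) H (@instTopologicalSpaceProd G H _ t') t' fun p => p.1 • p.2) →
        t ≤ t' := by
  let S : Set (GroupTopology H) := {t | @Continuous (G × H) H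
    (@instTopologicalSpaceProd G H _ t.toTopologicalSpace) t.toTopologicalSpace fun p => p.1 • p.2}
  refine ⟨(sInf S).toTopologicalSpace, (sInf S).toIsTopologicalGroup, ?_, ?_⟩
  · rw [GroupTopology.toTopologicalSpace_sInf]
    exact continuous_prod_sInf_of_forall <| Set.forall_mem_image.2 fun _ ht => ht
  · intro t' ht' hcont
    exact GroupTopology.toTopologicalSpace_le.2 (sInf_le (show ⟨t', ht'⟩ ∈ S from hcont))

/-- There is a finest group topology on `H` making a given action of a topological
group `G` by automorphisms continuous. -/
theorem exists_finest_group_topology_continuous_action {G H : Type*} [Group G]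
    [TopologicalSpace G] [IsTopologicalGroup G] [Group H] [MulDistribMulAction G H] :
    ∃ t : TopologicalSpace H, @IsTopologicalGroup H t _ ∧
      (@Continuous (G × H) H (@instTopologicalSpaceProd G H _ t) t fun p => p.1 • p.2) ∧
      ∀ t' : TopologicalSpace H, @IsTopologicalGroup H t' _ →
        (@Continuous (G × H) H (@instTopologicalSpaceProd G H _ t') t' fun p => p.1 • p.2) →
        t ≤ t' :=
  exists_finest_group_topology_continuous_action_general
end

section
/- Let G be a topological group with topology σ acting by automorphisms on a group H, and equip the semidirect product H ⋊ G with the finest group topology T under which the filter of neighbourhoods of the identity in the topology D × σ (D the discrete topology on H) converges to the identity. Then the subspace topology induced by T on the subgroup {e} × G equals σ. -/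
open TopologicalSpace Topology Filter

/-!
The topology `T₁` on `H ⋊ G` pulled back from `σ` along the projection onto `G` is a group
topology coarser than `D × σ`, so `T ≤ T₁` by maximality of `T`; since the projection is a
retraction of `{e} × G`, `T₁` induces `σ` there, giving one inequality. Conversely the inclusion
of `G` is continuous into `D × σ`, hence continuous at the identity into `T`, and a homomorphism
into a topological group that is continuous at the identity is continuous.
-/

namespace SemidirectProduct

variable {H G : Type*} [Group H] [Group G] {φ : G →* MulAut H} [TopologicalSpace G]

theorem induced_equivProd_le_induced_rightHom [TopologicalSpace H] :
    induced (fun p : H ⋊[φ] G => (p.left, p.right)) inferInstance ≤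
      induced (rightHom : H ⋊[φ] G →* G) ‹TopologicalSpace G› :=
  (induced_mono inf_le_right).trans_eq induced_compose

theorem induced_inr_induced_rightHom :
    induced (inr : G →* H ⋊[φ] G) (induced (rightHom : H ⋊[φ] G →* G) ‹TopologicalSpace G›) =
      ‹TopologicalSpace G› := by
  rw [induced_compose, ← MonoidHom.coe_comp, rightHom_comp_inr, MonoidHom.coe_id, induced_id]

theorem tendsto_inr_nhds_one_induced_equivProd [TopologicalSpace H] :
    Tendsto (inr : G →* H ⋊[φ] G) (𝓝 1)
      (@nhds _ (induced (fun p : H ⋊[φ] G => (p.left, p.right)) inferInstance) 1) := by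
  rw [nhds_induced, tendsto_comap_iff]
  exact ((continuous_const (y := (1 : H))).prodMk continuous_id).tendsto (1 : G)

end SemidirectProduct

open SemidirectProduct in
/-- With `T` the finest group topology on `H ⋊[φ] G` in which the neighbourhood filter of the
identity in the topology `D × σ` (discrete on `H`) converges to the identity, the topology
induced by `T` on the subgroup `{e} × G` is the original topology `σ` of `G`. -/
theorem induced_topology_on_G_eq_sigma {H G : Type*} [Group H] [Group G]
    [σ : TopologicalSpace G] [IsTopologicalGroup G] (φ : G →* MulAut H)
    (T : TopologicalSpace (H ⋊[φ] G)) (hT : @IsTopologicalGroup (H ⋊[φ] G) T _)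
    (hconv :
      @nhds (H ⋊[φ] G)
        (TopologicalSpace.induced (fun p : H ⋊[φ] G => (p.left, p.right))
          (@instTopologicalSpaceProd H G ⊥ σ)) 1 ≤ @nhds (H ⋊[φ] G) T 1)
    (hfinest : ∀ T' : TopologicalSpace (H ⋊[φ] G), @IsTopologicalGroup (H ⋊[φ] G) T' _ →
      @nhds (H ⋊[φ] G)
        (TopologicalSpace.induced (fun p : H ⋊[φ] G => (p.left, p.right))
          (@instTopologicalSpaceProd H G ⊥ σ)) 1 ≤ @nhds (H ⋊[φ] G) T' 1 → T ≤ T') :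
    TopologicalSpace.induced (⇑(SemidirectProduct.inr : G →* H ⋊[φ] G)) T = σ := by
  let _ : TopologicalSpace H := ⊥
  have hT_le : T ≤ induced (rightHom : H ⋊[φ] G →* G) σ :=
    hfinest _ (topologicalGroup_induced _) (nhds_mono induced_equivProd_le_induced_rightHom)
  refine le_antisymm ?_ ?_
  · calc induced (inr : G →* H ⋊[φ] G) T
        ≤ induced (inr : G →* H ⋊[φ] G) (induced (rightHom : H ⋊[φ] G →* G) σ) :=
          induced_mono hT_le
      _ = σ := induced_inr_induced_rightHom
  · have hinr : Tendsto (inr : G →* H ⋊[φ] G) (𝓝 1) (@nhds _ T 1) :=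
      tendsto_inr_nhds_one_induced_equivProd.mono_right hconv
    let _ := T
    exact continuous_iff_le_induced.1 (continuous_of_tendsto_nhds_one _ hinr)
end

section
/- Let G be a topological group acting by automorphisms on a group H, and let T be the finest group topology on the semidirect product H ⋊ G under which the neighbourhood filter of the identity in D × σ converges to the identity (D discrete on H, σ the topology of G). Then the subspace topology T_H induced on H × {e} is a group topology on H under which the action of G on H is continuous. -/
open TopologicalSpace Topology

/-!
Inside `H ⋊[φ] G` the action is conjugation: `inl (φ g h) = inr g * inl h * inr g⁻¹`. So once
`inr : G → H ⋊[φ] G` is continuous for `T`, the action is continuous for the topology on `H`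
induced by `inl`, which is a group topology because `inl` is an injective homomorphism into a
topological group. Continuity of `inr` only has to be checked at `1`, where it follows from the
convergence hypothesis, because `g ↦ (1, g)` is continuous into `D × σ`.
-/

namespace SemidirectProduct

variable {H G : Type*} [Group H] [Group G] {φ : G →* MulAut H}

theorem continuous_inr_induced_prod [tH : TopologicalSpace H] [tG : TopologicalSpace G] :
    Continuous[tG, induced (fun p : H ⋊[φ] G => (p.left, p.right)) inferInstance]
      (inr : G →* H ⋊[φ] G) :=
  continuous_induced_rng.2 <| by
    simpa [Function.comp_def] using continuous_const.prodMk continuous_id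

theorem continuous_inr_of_nhds_one_le [TopologicalSpace G] [IsTopologicalGroup G]
    [TopologicalSpace (H ⋊[φ] G)] [IsTopologicalGroup (H ⋊[φ] G)] (tH : TopologicalSpace H)
    (h : @nhds (H ⋊[φ] G) (induced (fun p : H ⋊[φ] G => (p.left, p.right))
      (@instTopologicalSpaceProd H G tH _)) 1 ≤ 𝓝 1) :
    Continuous (inr : G →* H ⋊[φ] G) :=
  continuous_of_continuousAt_one _ <| by
    have hD := @Continuous.tendsto _ _ _ (induced (fun p : H ⋊[φ] G => (p.left, p.right))
      (@instTopologicalSpaceProd H G tH _)) _ continuous_inr_induced_prod 1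
    rw [map_one] at hD
    rw [ContinuousAt, map_one]
    exact hD.mono_right h

theorem continuous_action_of_isInducing_inl [TopologicalSpace H] [TopologicalSpace G]
    [TopologicalSpace (H ⋊[φ] G)] [IsTopologicalGroup (H ⋊[φ] G)]
    (hinl : IsInducing (inl : H →* H ⋊[φ] G)) (hinr : Continuous (inr : G →* H ⋊[φ] G)) :
    Continuous fun p : G × H => φ p.1 p.2 := by
  have hconj : Continuous fun p : G × H =>
      (inr p.1 * inl p.2 * (inr p.1)⁻¹ : H ⋊[φ] G) := by
    have := hinl.continuous
    fun_prop
  exact hinl.continuous_iff.2 <| by simpa only [Function.comp_def, inl_aut, map_inv] using hconj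

end SemidirectProduct

open SemidirectProduct in
theorem induced_topology_on_H_group_topology_continuous_action_general {H G : Type*} [Group H] [Group G]
    [σ : TopologicalSpace G] [IsTopologicalGroup G] (φ : G →* MulAut H)
    (T : TopologicalSpace (H ⋊[φ] G)) (hT : @IsTopologicalGroup (H ⋊[φ] G) T _)
    (hconv :
      @nhds (H ⋊[φ] G)
        (TopologicalSpace.induced (fun p : H ⋊[φ] G => (p.left, p.right))
          (@instTopologicalSpaceProd H G ⊥ σ)) 1 ≤ @nhds (H ⋊[φ] G) T 1) :
    @IsTopologicalGroup H
      (TopologicalSpace.induced (⇑(SemidirectProduct.inl : H →* H ⋊[φ] G)) T) _ ∧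
    @Continuous (G × H) H
      (@instTopologicalSpaceProd G H σ
        (TopologicalSpace.induced (⇑(SemidirectProduct.inl : H →* H ⋊[φ] G)) T))
      (TopologicalSpace.induced (⇑(SemidirectProduct.inl : H →* H ⋊[φ] G)) T)
      (fun p => φ p.1 p.2) := by
  let _ := T
  let _ : TopologicalSpace H := induced (inl : H →* H ⋊[φ] G) T
  have hinl : IsInducing (inl : H →* H ⋊[φ] G) := ⟨rfl⟩
  exact ⟨hinl.topologicalGroup _,
    continuous_action_of_isInducing_inl hinl (continuous_inr_of_nhds_one_le ⊥ hconv)⟩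

/-- With `T` the finest group topology on `H ⋊[φ] G` in which the neighbourhood filter of the
identity in `D × σ` (discrete on `H`) converges to the identity, the topology induced by `T`
on `H × {e}` is a group topology on `H` under which the action of `G` on `H` is continuous. -/
theorem induced_topology_on_H_group_topology_continuous_action {H G : Type*} [Group H] [Group G]
    [σ : TopologicalSpace G] [IsTopologicalGroup G] (φ : G →* MulAut H)
    (T : TopologicalSpace (H ⋊[φ] G)) (hT : @IsTopologicalGroup (H ⋊[φ] G) T _)
    (hconv :
      @nhds (H ⋊[φ] G)
        (TopologicalSpace.induced (fun p : H ⋊[φ] G => (p.left, p.right))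
          (@instTopologicalSpaceProd H G ⊥ σ)) 1 ≤ @nhds (H ⋊[φ] G) T 1)
    (hfinest : ∀ T' : TopologicalSpace (H ⋊[φ] G), @IsTopologicalGroup (H ⋊[φ] G) T' _ →
      @nhds (H ⋊[φ] G)
        (TopologicalSpace.induced (fun p : H ⋊[φ] G => (p.left, p.right))
          (@instTopologicalSpaceProd H G ⊥ σ)) 1 ≤ @nhds (H ⋊[φ] G) T' 1 → T ≤ T') :
    @IsTopologicalGroup H
      (TopologicalSpace.induced (⇑(SemidirectProduct.inl : H →* H ⋊[φ] G)) T) _ ∧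
    @Continuous (G × H) H
      (@instTopologicalSpaceProd G H σ
        (TopologicalSpace.induced (⇑(SemidirectProduct.inl : H →* H ⋊[φ] G)) T))
      (TopologicalSpace.induced (⇑(SemidirectProduct.inl : H →* H ⋊[φ] G)) T)
      (fun p => φ p.1 p.2) :=
  induced_topology_on_H_group_topology_continuous_action_general (σ := σ) φ T hT hconv
end

section
/- Let F be a downward directed family of nonempty subsets of a group G. Among all topologies on G making multiplication (but not necessarily inversion) continuous and in which F converges to the identity, there exists a finest one. -/
/-- There is a finest semigroup topology (a topology making multiplication continuous) on a
group `G` in which a downward directed family `F` of nonempty subsets converges to the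
identity. -/
theorem exists_finest_semigroup_topology_converging {G : Type*} [Group G]
    (F : Set (Set G)) (hFne : F.Nonempty) (hne : ∀ S ∈ F, S.Nonempty)
    (hdir : ∀ S ∈ F, ∀ T ∈ F, ∃ R ∈ F, R ⊆ S ∩ T) :
    ∃ t : TopologicalSpace G, @ContinuousMul G t _ ∧
      (∀ U ∈ @nhds G t 1, ∃ S ∈ F, S ⊆ U) ∧
      ∀ t' : TopologicalSpace G, @ContinuousMul G t' _ →
        (∀ U ∈ @nhds G t' 1, ∃ S ∈ F, S ⊆ U) → t ≤ t' := by
  classical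
  set f : Filter G := ⨅ S ∈ F, Filter.principal S with hf
  have hdirected : DirectedOn ((fun S => Filter.principal S) ⁻¹'o (· ≥ ·)) F := by
    intro S hS T hT
    obtain ⟨R, hR, hRsub⟩ := hdir S hS T hT
    exact ⟨R, hR, Filter.principal_mono.2 (hRsub.trans Set.inter_subset_left),
      Filter.principal_mono.2 (hRsub.trans Set.inter_subset_right)⟩
  have hmemf : ∀ U : Set G, U ∈ f ↔ ∃ S ∈ F, S ⊆ U := by
    intro U
    rw [hf, Filter.mem_biInf_of_directed hdirected hFne]
    simp [Filter.mem_principal]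
  have hle : ∀ g : Filter G, f ≤ g ↔ ∀ U ∈ g, ∃ S ∈ F, S ⊆ U := by
    intro g
    constructor
    · intro h U hU
      exact (hmemf U).1 (h hU)
    · intro h U hU
      exact (hmemf U).2 (h U hU)
  set T : Set (TopologicalSpace G) :=
    {t | @ContinuousMul G t _ ∧ ∀ U ∈ @nhds G t 1, ∃ S ∈ F, S ⊆ U} with hT
  refine ⟨sInf T, continuousMul_sInf (fun t ht => ht.1), ?_, ?_⟩
  · intro U hU
    rw [nhds_sInf] at hU
    refine (hmemf U).1 ?_
    refine (le_iInf₂ fun t ht => ?_ : f ≤ ⨅ t ∈ T, @nhds G t 1) hU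
    exact (hle _).2 ht.2
  · intro t' hmul hconv
    exact sInf_le ⟨hmul, hconv⟩
end

section
/- Let G be a topological group acting by automorphisms on a ring R. Among all ring topologies on R for which the action map G × R → R is continuous, there exists a finest one. -/
theorem isTopologicalRing_sInf {R : Type*} [NonUnitalNonAssocRing R]
    {ts : Set (TopologicalSpace R)} (h : ∀ t ∈ ts, @IsTopologicalRing R t _) :
    @IsTopologicalRing R (sInf ts) _ :=
  letI := sInf ts
  { toContinuousAdd := continuousAdd_sInf fun t ht => (h t ht).toContinuousAdd
    toContinuousMul := continuousMul_sInf fun t ht => (h t ht).toContinuousMul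
    toContinuousNeg := continuousNeg_sInf fun t ht => (h t ht).toContinuousNeg }

theorem exists_finest_ring_topology_continuous_action_general {G R : Type*} [Group G]
    [TopologicalSpace G] [Ring R] [MulSemiringAction G R] :
    ∃ t : TopologicalSpace R, @IsTopologicalRing R t _ ∧
      (@Continuous (G × R) R (@instTopologicalSpaceProd G R _ t) t fun p => p.1 • p.2) ∧
      ∀ t' : TopologicalSpace R, @IsTopologicalRing R t' _ →
        (@Continuous (G × R) R (@instTopologicalSpaceProd G R _ t') t' fun p => p.1 • p.2) →
        t ≤ t' := by
  let S : Set (TopologicalSpace R) :=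
    {t | @IsTopologicalRing R t _ ∧ @ContinuousSMul G R _ _ t}
  refine ⟨sInf S, isTopologicalRing_sInf fun t ht => ht.1,
    (continuousSMul_sInf fun t ht => ht.2).continuous_smul,
    fun t' hring hsmul => sInf_le ⟨hring, ⟨hsmul⟩⟩⟩

/-- There is a finest ring topology on `R` making a given action of a topological group `G` by
ring automorphisms continuous. -/
theorem exists_finest_ring_topology_continuous_action {G R : Type*} [Group G]
    [TopologicalSpace G] [IsTopologicalGroup G] [Ring R] [MulSemiringAction G R] :
    ∃ t : TopologicalSpace R, @IsTopologicalRing R t _ ∧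
      (@Continuous (G × R) R (@instTopologicalSpaceProd G R _ t) t fun p => p.1 • p.2) ∧
      ∀ t' : TopologicalSpace R, @IsTopologicalRing R t' _ →
        (@Continuous (G × R) R (@instTopologicalSpaceProd G R _ t') t' fun p => p.1 • p.2) →
        t ≤ t' :=
  exists_finest_ring_topology_continuous_action_general
end

section
/- Let (X,G) be a small Polish structure (for every n there are only countably many G-orbits on Xⁿ), let a ⊆ X be a finite tuple, and let A ⊆ B ⊆ X be finite. Then there exists b in the orbit of a over A such that b is nm-independent from B over A. -/
/-- The pointwise stabilizer of a set `A ⊆ X` in `G`. -/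
def pstab (G : Type*) {X : Type*} [Group G] [MulAction G X] (A : Set X) : Subgroup G where
  carrier := {g : G | ∀ x ∈ A, g • x = x}
  one_mem' := fun x _ => one_smul G x
  mul_mem' := by
    intro a b ha hb x hx
    rw [mul_smul, hb x hx, ha x hx]
  inv_mem' := by
    intro a ha x hx
    rw [inv_smul_eq_iff, ha x hx]

/-- `a` is nm-independent from `B` over `A`: the preimage under `π_A : G_A → o(a/A)`,
`g ↦ g • a`, of the orbit `o(a/A ∪ B)` is non-meager in `π_A⁻¹[o(a/A)] = G_A`. -/
def NmInd (G : Type*) {X : Type*} [Group G] [TopologicalSpace G] [MulAction G X] {n : ℕ}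
    (a : Fin n → X) (A B : Set X) : Prop :=
  ¬ IsMeagre {g : ↥(pstab G A) | (g • a : Fin n → X) ∈ MulAction.orbit ↥(pstab G (A ∪ B)) a}

/-!
`G_A` is a closed subgroup of a Polish group, hence a Baire space. Prepending an enumeration `c`
of the finite set `A ∪ B` embeds the `G_{A ∪ B}`-orbits on `Xⁿ` into the `G`-orbits on `X^{|c| + n}`,
so there are countably many of them, and the fibres of `g ↦ o(g • a / A ∪ B)` cover `G_A` by
countably many sets, one of which is non-meagre. If `g` lies in that fibre, `b = g • a` works:
the set in the definition of `NmInd G b A B` is the right translate of that fibre by `g⁻¹`.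
-/

open MulAction

theorem isClosed_pstab {G X : Type*} [Group G] [TopologicalSpace G] [MulAction G X]
    (hstab : ∀ x : X, IsClosed (stabilizer G x : Set G)) (A : Set X) :
    IsClosed (pstab G A : Set G) := by
  have : (pstab G A : Set G) = ⋂ x ∈ A, (stabilizer G x : Set G) := by
    ext g
    simp only [Set.mem_iInter, SetLike.mem_coe, mem_stabilizer_iff]
    rfl
  rw [this]
  exact isClosed_biInter fun x _ => hstab x

section Append

variable {M X : Type*} [Monoid M] [MulAction M X] {m n : ℕ}

theorem Fin.smul_append (g : M) (c : Fin m → X) (x : Fin n → X) :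
    g • Fin.append c x = Fin.append (g • c) (g • x) := by
  funext i
  refine Fin.addCases (fun i => ?_) (fun j => ?_) i <;> simp

theorem Fin.append_eq_append_iff {c d : Fin m → X} {x y : Fin n → X} :
    Fin.append c x = Fin.append d y ↔ c = d ∧ x = y := by
  refine ⟨fun h => ⟨funext fun i => ?_, funext fun j => ?_⟩, fun h => h.1 ▸ h.2 ▸ rfl⟩
  · simpa using congrFun h (Fin.castAdd n i)
  · simpa using congrFun h (Fin.natAdd m j)

end Append

theorem Fin.append_mem_orbit_iff {G X : Type*} [Group G] [MulAction G X] {m n : ℕ}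
    (c : Fin m → X) (x y : Fin n → X) :
    Fin.append c x ∈ orbit G (Fin.append c y) ↔ x ∈ orbit (pstab G (Set.range c)) y := by
  constructor
  · rintro ⟨g, hg⟩
    change g • _ = _ at hg
    rw [Fin.smul_append, Fin.append_eq_append_iff] at hg
    refine ⟨⟨g, ?_⟩, hg.2⟩
    rintro _ ⟨i, rfl⟩
    exact congrFun hg.1 i
  · rintro ⟨⟨g, hg⟩, rfl⟩
    refine ⟨g, ?_⟩
    change g • _ = _
    rw [Fin.smul_append]
    congr
    funext i
    exact hg _ ⟨i, rfl⟩

theorem countable_quotient_orbitRel_pstab_range {G X : Type*} [Group G] [MulAction G X]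
    {m n : ℕ} [Countable (Quotient (orbitRel G (Fin (m + n) → X)))] (c : Fin m → X) :
    Countable (Quotient (orbitRel (pstab G (Set.range c)) (Fin n → X))) := by
  let f : Quotient (orbitRel (pstab G (Set.range c)) (Fin n → X)) →
      Quotient (orbitRel G (Fin (m + n) → X)) :=
    Quotient.map (Fin.append c) fun x y h => (Fin.append_mem_orbit_iff c x y).2 h
  refine Function.Injective.countable (f := f) fun p q => ?_
  induction p using Quotient.inductionOn
  induction q using Quotient.inductionOn
  intro h
  exact Quotient.sound ((Fin.append_mem_orbit_iff c _ _).1 (Quotient.exact h))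

theorem countable_quotient_orbitRel_pstab {G X : Type*} [Group G] [MulAction G X]
    (hsmall : ∀ n : ℕ, Countable (Quotient (orbitRel G (Fin n → X)))) {C : Set X}
    (hC : C.Finite) (n : ℕ) : Countable (Quotient (orbitRel (pstab G C) (Fin n → X))) := by
  obtain ⟨m, c, rfl⟩ := hC.fin_embedding
  have := hsmall (m + n)
  exact countable_quotient_orbitRel_pstab_range c

theorem exists_not_isMeagre_preimage_singleton {α ι : Type*} [TopologicalSpace α] [BaireSpace α]
    [Nonempty α] [Countable ι] (f : α → ι) : ∃ i, ¬ IsMeagre (f ⁻¹' {i}) := by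
  by_contra! h
  have hcover : Set.univ = ⋃ i, f ⁻¹' {i} := by ext; simp
  refine not_isMeagre_of_isOpen (X := α) isOpen_univ Set.univ_nonempty ?_
  rw [hcover]
  exact isMeagre_iUnion h

theorem exists_mem_orbit_not_isMeagre {H Y : Type*} [Group H] [TopologicalSpace H]
    [SeparatelyContinuousMul H] [BaireSpace H] [MulAction H Y] (r : Setoid Y)
    [Countable (Quotient r)] (a : Y) : ∃ b ∈ orbit H a, ¬ IsMeagre {h : H | r (h • b) b} := by
  obtain ⟨q, hq⟩ := exists_not_isMeagre_preimage_singleton fun h : H => Quotient.mk r (h • a)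
  obtain ⟨g, rfl : Quotient.mk r (g • a) = q⟩ := nonempty_of_not_isMeagre hq
  refine ⟨g • a, mem_orbit a g, fun hmeagre => hq ?_⟩
  have hfiber : (fun h : H => Quotient.mk r (h • a)) ⁻¹' {Quotient.mk r (g • a)} =
      Homeomorph.mulRight g⁻¹ ⁻¹' {h : H | r (h • g • a) (g • a)} := by
    ext h
    simp only [Set.mem_preimage, Set.mem_singleton_iff, Homeomorph.coe_mulRight,
      Set.mem_ofPred_eq, smul_smul, inv_mul_cancel_right, Quotient.eq]
  rw [hfiber]
  exact hmeagre.preimage_of_isOpenMap (Homeomorph.continuous _) (Homeomorph.isOpenMap _)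

theorem exists_nm_independent_extension_general {G X : Type*} [Group G] [TopologicalSpace G]
    [IsTopologicalGroup G] [PolishSpace G] [MulAction G X]
    (hstab : ∀ x : X, IsClosed (MulAction.stabilizer G x : Set G))
    (hsmall : ∀ n : ℕ, Countable (Quotient (MulAction.orbitRel G (Fin n → X))))
    {n : ℕ} (a : Fin n → X) (A B : Finset X) :
    ∃ b : Fin n → X, b ∈ MulAction.orbit ↥(pstab G (A : Set X)) a ∧ NmInd G b (A : Set X) (B : Set X) := by
  have : PolishSpace (pstab G (A : Set X)) := (isClosed_pstab hstab _).polishSpace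
  have : Countable (Quotient (orbitRel (pstab G ((A : Set X) ∪ B)) (Fin n → X))) :=
    countable_quotient_orbitRel_pstab hsmall (A.finite_toSet.union B.finite_toSet) n
  exact exists_mem_orbit_not_isMeagre (orbitRel (pstab G ((A : Set X) ∪ B)) (Fin n → X)) a

/-- Existence of nm-independent extensions in small Polish structures. -/
theorem exists_nm_independent_extension {G X : Type*} [Group G] [TopologicalSpace G]
    [IsTopologicalGroup G] [PolishSpace G] [MulAction G X] [FaithfulSMul G X]
    (hstab : ∀ x : X, IsClosed (MulAction.stabilizer G x : Set G))
    (hsmall : ∀ n : ℕ, Countable (Quotient (MulAction.orbitRel G (Fin n → X))))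
    {n : ℕ} (a : Fin n → X) (A B : Finset X) (hAB : (A : Set X) ⊆ (B : Set X)) :
    ∃ b : Fin n → X, b ∈ MulAction.orbit ↥(pstab G (A : Set X)) a ∧ NmInd G b (A : Set X) (B : Set X) :=
  exists_nm_independent_extension_general hstab hsmall a A B
end

section
/- nm-independence is symmetric: for all finite tuples a, b and finite C ⊆ X in a Polish structure (X,G), a is nm-independent from b over C if and only if b is nm-independent from a over C. -/
/-! If `g ∈ G_C` sends `a` to `h • a` with `h ∈ G_{C ∪ b}`, then `k = h⁻¹ g` fixes `C ∪ a` and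
`k⁻¹ • b = g⁻¹ • b`, so `g⁻¹` sends `b` into its `G_{C ∪ a}`-orbit. Hence the subset of `G_C` witnessing that `b` is
nm-independent from `a` is the inverse of the one witnessing that `a` is nm-independent from `b`,
and inversion is a homeomorphism of `G_C`, so it preserves meagreness. -/

open Pointwise

lemma isMeagre_inv {H : Type*} [TopologicalSpace H] [InvolutiveInv H] [ContinuousInv H]
    {s : Set H} : IsMeagre s⁻¹ ↔ IsMeagre s := by
  have key : ∀ t : Set H, IsMeagre t → IsMeagre t⁻¹ := fun t ht =>
    ht.preimage_of_isOpenMap continuous_inv (Homeomorph.inv H).isOpenMap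
  exact ⟨fun h => by simpa using key _ h, key s⟩

section

variable {G X : Type*} [Group G] [MulAction G X] {ι κ : Type*}

lemma inv_smul_mem_orbit_pstab_union {a : ι → X} {b : κ → X} {C : Set X} {g : pstab G C}
    (hg : g • a ∈ MulAction.orbit (pstab G (C ∪ Set.range b)) a) :
    g⁻¹ • b ∈ MulAction.orbit (pstab G (C ∪ Set.range a)) b := by
  obtain ⟨h, hh⟩ := hg
  have hk : (h : G)⁻¹ * g ∈ pstab G (C ∪ Set.range a) := by
    rintro x (hx | ⟨i, rfl⟩)
    · rw [mul_smul, g.2 x hx, inv_smul_eq_iff, h.2 x (Or.inl hx)]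
    · have hha : (h : G) • a i = (g : G) • a i := congrFun hh i
      rw [mul_smul, ← hha, inv_smul_smul]
  refine ⟨⟨_, hk⟩⁻¹, funext fun i => ?_⟩
  have hb : (h : G) • b i = b i := h.2 (b i) (Or.inr ⟨i, rfl⟩)
  show ((h : G)⁻¹ * g)⁻¹ • b i = (g : G)⁻¹ • b i
  rw [mul_inv_rev, inv_inv, mul_smul, hb]

lemma setOf_smul_mem_orbit_pstab_union_eq_inv (a : ι → X) (b : κ → X) (C : Set X) :
    {g : pstab G C | g • b ∈ MulAction.orbit (pstab G (C ∪ Set.range a)) b} =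
      {g : pstab G C | g • a ∈ MulAction.orbit (pstab G (C ∪ Set.range b)) a}⁻¹ := by
  ext g
  refine ⟨inv_smul_mem_orbit_pstab_union, fun hg => ?_⟩
  simpa using inv_smul_mem_orbit_pstab_union hg

end

theorem nmInd_symm_general {G X : Type*} [Group G] [TopologicalSpace G]
    [IsTopologicalGroup G] [MulAction G X]
    {n m : ℕ} (a : Fin n → X) (b : Fin m → X) (C : Finset X) :
    NmInd G a (C : Set X) (Set.range b) ↔ NmInd G b (C : Set X) (Set.range a) := by
  rw [NmInd, NmInd, setOf_smul_mem_orbit_pstab_union_eq_inv, isMeagre_inv]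

/-- Symmetry of nm-independence in a Polish structure. -/
theorem nmInd_symm {G X : Type*} [Group G] [TopologicalSpace G]
    [IsTopologicalGroup G] [PolishSpace G] [MulAction G X] [FaithfulSMul G X]
    (hstab : ∀ x : X, IsClosed (MulAction.stabilizer G x : Set G))
    {n m : ℕ} (a : Fin n → X) (b : Fin m → X) (C : Finset X) :
    NmInd G a (C : Set X) (Set.range b) ↔ NmInd G b (C : Set X) (Set.range a) :=
  nmInd_symm_general a b C
end

section
/- Let X be an uncountable set and G a group acting on X; consider the induced action of G by automorphisms on the direct sum H(X) = ⊕_{x∈X} H_x of copies of a nontrivial group H, given by g·(h₁)_{x₁}+⋯+(h_n)_{x_n} = (h₁)_{g·x₁}+⋯+(h_n)_{g·x_n}. If G is a Polish group acting continuously and the action of G on X has all point stabilizers closed, then (H(X), G) is a Polish structure, i.e., the stabilizer in G of every element of H(X) is closed. -/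
/-!
An element `g` fixes `f : X →₀ H` exactly when, for each of the finitely many points `x` of the
support, both `g` and `g⁻¹` send `x` to a point with the same value `f x`. The set of `g` with
`g • x = y` is empty or a left coset of the stabilizer of `x`, hence closed; so each such
condition is a finite union of closed sets, and the stabilizer of `f` is a finite intersection
of them.
-/

open MulAction Pointwise

section Transporter

variable {G X : Type*} [Group G] [MulAction G X]

theorem setOf_smul_eq_smul_eq_leftCoset (g₀ : G) (x : X) :
    {g : G | g • x = g₀ • x} = g₀ • (stabilizer G x : Set G) := by
  ext g
  rw [mem_leftCoset_iff, Set.mem_ofPred_eq, SetLike.mem_coe, mem_stabilizer_iff, mul_smul,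
    inv_smul_eq_iff]

variable [TopologicalSpace G]

theorem isClosed_setOf_smul_eq [ContinuousMul G] {x : X}
    (hx : IsClosed (stabilizer G x : Set G)) (y : X) : IsClosed {g : G | g • x = y} := by
  by_cases hy : ∃ g₀ : G, g₀ • x = y
  · obtain ⟨g₀, rfl⟩ := hy
    rw [setOf_smul_eq_smul_eq_leftCoset]
    exact hx.leftCoset g₀
  · convert isClosed_empty
    exact Set.eq_empty_of_forall_notMem fun g hg ↦ hy ⟨g, hg⟩

theorem isClosed_setOf_smul_mem [ContinuousMul G] {x : X}
    (hx : IsClosed (stabilizer G x : Set G)) {s : Set X} (hs : s.Finite) :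
    IsClosed {g : G | g • x ∈ s} := by
  have : {g : G | g • x ∈ s} = ⋃ y ∈ s, {g : G | g • x = y} := by
    ext g; simp
  rw [this]
  exact hs.isClosed_biUnion fun y _ ↦ isClosed_setOf_smul_eq hx y

end Transporter

section Finsupp

variable {G X M : Type*} [Group G] [MulAction G X] [Zero M]

theorem Finsupp.setOf_forall_apply_smul_eq (f : X →₀ M) :
    {g : G | ∀ x, f (g • x) = f x} =
      ⋂ x ∈ f.support, {g : G | f (g • x) = f x} ∩ {g : G | f (g⁻¹ • x) = f x} := by
  ext g
  simp only [Set.mem_ofPred_eq, Set.mem_iInter, Set.mem_inter_iff, Finsupp.mem_support_iff]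
  refine ⟨fun hg x _ ↦ ⟨hg x, by rw [← hg (g⁻¹ • x), smul_inv_smul]⟩, fun hg x ↦ ?_⟩
  by_cases hx : f x = 0
  · rw [hx]
    by_contra hgx
    -- the condition on `g⁻¹` at the support point `g • x` reads `f x = f (g • x)`
    have h := (hg (g • x) hgx).2
    rw [inv_smul_smul] at h
    exact hgx (h.symm.trans hx)
  · exact (hg x hx).1

theorem Finsupp.isClosed_setOf_apply_smul_eq [TopologicalSpace G] [ContinuousMul G]
    (f : X →₀ M) {x : X} (hstab : IsClosed (stabilizer G x : Set G)) (hx : f x ≠ 0) :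
    IsClosed {g : G | f (g • x) = f x} :=
  isClosed_setOf_smul_mem (s := {y | f y = f x}) hstab <|
    f.support.finite_toSet.subset fun _ hy ↦ Finsupp.mem_support_iff.mpr (hy.symm ▸ hx)

end Finsupp

theorem finsupp_polish_structure_general {G X H : Type*} [Group G] [TopologicalSpace G]
    [IsTopologicalGroup G] [MulAction G X] [AddGroup H]
    (hstab : ∀ x : X, IsClosed (MulAction.stabilizer G x : Set G)) :
    ∀ f : X →₀ H, IsClosed {g : G | ∀ x : X, f (g • x) = f x} := by
  intro f
  rw [f.setOf_forall_apply_smul_eq]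
  refine isClosed_biInter fun x hx ↦ ?_
  have hfx := f.isClosed_setOf_apply_smul_eq (hstab x) (Finsupp.mem_support_iff.mp hx)
  exact hfx.inter (hfx.preimage continuous_inv)

/-- If `G` is a Polish group acting on an uncountable set `X` with all point stabilizers
closed, then for the induced action of `G` on the direct sum `H(X) = ⊕_{x ∈ X} H` (by
permuting coordinates), the stabilizer of every element of `H(X)` is closed, i.e.
`(H(X), G)` is a Polish structure. -/
theorem finsupp_polish_structure {G X H : Type*} [Group G] [TopologicalSpace G]
    [IsTopologicalGroup G] [PolishSpace G] [MulAction G X] [AddGroup H] [Nontrivial H]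
    [Uncountable X]
    (hstab : ∀ x : X, IsClosed (MulAction.stabilizer G x : Set G)) :
    ∀ f : X →₀ H, IsClosed {g : G | ∀ x : X, f (g • x) = f x} :=
  finsupp_polish_structure_general hstab
end
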